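/- For every s ∈ ℝ and every w ∈ ℝ, |w·g_s(w)| ≤ 1. -/

import Mathlib

open MeasureTheory

noncomputable def Phi (s : ℝ) : ℝ :=
  ((ProbabilityTheory.gaussianReal 0 1) (Set.Iic s)).toReal

noncomputable def steinG (s w : ℝ) : ℝ :=
  Real.exp (w ^ 2 / 2) *
    ∫ u in Set.Iic w, ((if u ≤ s then (1 : ℝ) else 0) - Phi s) * Real.exp (-u ^ 2 / 2)

/-!
Integrating the indicator against the Gaussian kernel gives the closed form
`g_s(w) = √(2π) e^{w²/2} (Φ(min s w) - Φ(s) Φ(w))`. The bracket is a covariance of two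
indicators, bounded by `Φ(w) (1 - Φ(w)) ≤ Φ(-|w|)`, and the Gaussian tail bound
`t ∫_{-∞}^{-t} e^{-u²/2} du ≤ e^{-t²/2}` (from `t ≤ -u` on the range of integration) at `t = |w|`
cancels the factor `|w| e^{w²/2}`.
-/

open Real ProbabilityTheory Set Filter Topology

lemma abs_cdf_min_sub_mul_le (μ : Measure ℝ) (s w : ℝ) :
    |cdf μ (min s w) - cdf μ s * cdf μ w| ≤ cdf μ w * (1 - cdf μ w) := by
  have hs0 := cdf_nonneg μ s
  have hs1 := cdf_le_one μ s
  have hw0 := cdf_nonneg μ w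
  have hw1 := cdf_le_one μ w
  rcases le_total s w with h | h
  · have := monotone_cdf μ h
    rw [min_eq_left h, abs_of_nonneg (by nlinarith)]
    nlinarith
  · have := monotone_cdf μ h
    rw [min_eq_right h, abs_of_nonneg (by nlinarith)]
    nlinarith

lemma hasDerivAt_exp_neg_sq_div_two (u : ℝ) :
    HasDerivAt (fun u : ℝ => exp (-u ^ 2 / 2)) (-u * exp (-u ^ 2 / 2)) u := by
  have h : HasDerivAt (fun u : ℝ => -u ^ 2 / 2) (-u) u :=
    ((hasDerivAt_pow 2 u).neg.div_const 2).congr_deriv (by push_cast; ring)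
  simpa [mul_comm] using h.exp

lemma integrable_exp_neg_sq_div_two : Integrable (fun u : ℝ => exp (-u ^ 2 / 2)) := by
  simpa [neg_div, div_eq_inv_mul] using integrable_exp_neg_mul_sq (b := (2 : ℝ)⁻¹) (by norm_num)

lemma mul_setIntegral_Iic_neg_le (t : ℝ) :
    t * ∫ u in Iic (-t), exp (-u ^ 2 / 2) ≤ exp (-t ^ 2 / 2) := by
  have hint : IntegrableOn (fun u : ℝ => -u * exp (-u ^ 2 / 2)) (Iic (-t)) := by
    simpa [neg_div, div_eq_inv_mul] using
      (integrable_mul_exp_neg_mul_sq (b := (2 : ℝ)⁻¹) (by norm_num)).neg.integrableOn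
  have hlim : Tendsto (fun u : ℝ => exp (-u ^ 2 / 2)) atBot (𝓝 0) := by
    refine tendsto_exp_atBot.comp (Tendsto.atBot_div_const two_pos ?_)
    simpa [sq] using (tendsto_id (α := ℝ)).atBot_mul_atBot₀ tendsto_id
  have hprim : ∫ u in Iic (-t), -u * exp (-u ^ 2 / 2) = exp (-t ^ 2 / 2) := by
    simpa using integral_Iic_of_hasDerivAt_of_tendsto
      (hasDerivAt_exp_neg_sq_div_two (-t)).continuousAt.continuousWithinAt
      (fun u _ => hasDerivAt_exp_neg_sq_div_two u) hint hlim
  rw [← hprim, ← integral_const_mul]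
  refine setIntegral_mono_on (integrable_exp_neg_sq_div_two.const_mul t).integrableOn hint
    measurableSet_Iic fun u (hu : u ≤ -t) => ?_
  gcongr
  linarith

lemma Phi_eq_cdf : Phi = cdf (gaussianReal 0 1) := by
  ext x
  rw [cdf_eq_real, measureReal_def, Phi]

lemma Phi_neg (x : ℝ) : Phi (-x) = 1 - Phi x := by
  have hsymm : gaussianReal 0 1 (Iic (-x)) = gaussianReal 0 1 (Ici x) := by
    conv_lhs => rw [← neg_zero, ← gaussianReal_map_neg]
    rw [Measure.map_apply measurable_neg measurableSet_Iic]
    congr 1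
    ext u
    simp
  have := nullSingletonClass_gaussianReal (μ := 0) one_ne_zero
  rw [Phi, Phi, hsymm, measure_congr Ioi_ae_eq_Ici.symm, ← compl_Iic,
    prob_compl_eq_one_sub measurableSet_Iic,
    ENNReal.toReal_sub_of_le prob_le_one ENNReal.one_ne_top, ENNReal.toReal_one]

lemma Phi_mul_one_sub_le (w : ℝ) : Phi w * (1 - Phi w) ≤ Phi (-|w|) := by
  have h0 : 0 ≤ Phi w := Phi_eq_cdf ▸ cdf_nonneg _ w
  have h1 : Phi w ≤ 1 := Phi_eq_cdf ▸ cdf_le_one _ w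
  rcases le_total 0 w with hw | hw
  · rw [abs_of_nonneg hw, Phi_neg]
    nlinarith
  · rw [abs_of_nonpos hw, neg_neg]
    nlinarith

lemma setIntegral_Iic_exp_neg_sq_div_two (x : ℝ) :
    ∫ u in Iic x, exp (-u ^ 2 / 2) = √(2 * π) * Phi x := by
  rw [Phi, gaussianReal_apply_eq_integral 0 one_ne_zero,
    ENNReal.toReal_ofReal (setIntegral_nonneg measurableSet_Iic fun u _ =>
      gaussianPDFReal_nonneg 0 1 u), ← integral_const_mul]
  refine setIntegral_congr_fun measurableSet_Iic fun u _ => ?_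
  have : √(2 * π) ≠ 0 := by positivity
  simp [gaussianPDFReal, field]

lemma steinG_eq (s w : ℝ) :
    steinG s w = exp (w ^ 2 / 2) * (√(2 * π) * (Phi (min s w) - Phi s * Phi w)) := by
  have hsplit : ∀ u : ℝ, ((if u ≤ s then (1 : ℝ) else 0) - Phi s) * exp (-u ^ 2 / 2)
      = (Iic s).indicator (fun u => exp (-u ^ 2 / 2)) u - Phi s * exp (-u ^ 2 / 2) := by
    intro u
    by_cases h : u ≤ s <;> simp [indicator, h, sub_mul]
  have hint := integrable_exp_neg_sq_div_two
  rw [steinG, funext hsplit, integral_sub (hint.indicator measurableSet_Iic).integrableOn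
      (hint.const_mul _).integrableOn, setIntegral_indicator measurableSet_Iic, Iic_inter_Iic,
    integral_const_mul, inf_comm, setIntegral_Iic_exp_neg_sq_div_two,
    setIntegral_Iic_exp_neg_sq_div_two]
  ring

/-- The Stein solution satisfies `|w * g_s w| ≤ 1` for all `s, w ∈ ℝ`. -/
theorem abs_mul_steinG_le_one (s w : ℝ) : |w * steinG s w| ≤ 1 := by
  have hcov : |Phi (min s w) - Phi s * Phi w| ≤ Phi (-|w|) :=
    (Phi_eq_cdf ▸ abs_cdf_min_sub_mul_le _ s w).trans (Phi_mul_one_sub_le w)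
  have htail : |w| * (√(2 * π) * Phi (-|w|)) ≤ exp (-w ^ 2 / 2) := by
    simpa [setIntegral_Iic_exp_neg_sq_div_two] using mul_setIntegral_Iic_neg_le |w|
  calc |w * steinG s w|
      = exp (w ^ 2 / 2) * (|w| * (√(2 * π) * |Phi (min s w) - Phi s * Phi w|)) := by
        rw [steinG_eq, abs_mul, abs_mul, abs_mul, abs_of_pos (exp_pos _),
          abs_of_nonneg (sqrt_nonneg _)]
        ring
    _ ≤ exp (w ^ 2 / 2) * (|w| * (√(2 * π) * Phi (-|w|))) := by gcongr
    _ ≤ exp (w ^ 2 / 2) * exp (-w ^ 2 / 2) := by gcongr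
    _ = 1 := by rw [← exp_add, neg_div, add_neg_cancel, exp_zero]
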